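/- arXiv:2512.13602 — 4 statements merged into one kernel-verified Lean document; each statement's English description precedes it below -/
import Mathlib

section
/- Mean value theorem for the Cauchy Δ-integral: Let E be a real Banach space, [a,b]_T a time scale interval, and u : [a,b]_T → E rd-continuous. Then for every t₀ ∈ [a,b]_T, the Cauchy Δ-integral ∫_a^{t₀} u(s) Δs lies in (t₀ − a)·closedConvexHull{u(s) : s ∈ [a, t₀]_T}. -/
open Set Filter Pointwise

open Classical in
/-- Forward jump operator of a time scale. -/
noncomputable def tsSigma (T : Set ℝ) (t : ℝ) : ℝ :=
  if ({s | s ∈ T ∧ t < s}).Nonempty then sInf {s | s ∈ T ∧ t < s} else sSup T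

open Classical in
/-- Backward jump operator of a time scale. -/
noncomputable def tsRho (T : Set ℝ) (t : ℝ) : ℝ :=
  if ({s | s ∈ T ∧ s < t}).Nonempty then sSup {s | s ∈ T ∧ s < t} else sInf T

/-- `T^κ` : `T` minus a left-scattered maximum, if any. -/
def tsKappa (T : Set ℝ) : Set ℝ :=
  T \ {t | IsGreatest T t ∧ tsRho T t < t}

/-- `u` is Δ-differentiable at `t` with Δ-derivative `L`. -/
def IsDeltaDerivAt {E : Type*} [NormedAddCommGroup E] [NormedSpace ℝ E]
    (T : Set ℝ) (u : ℝ → E) (t : ℝ) (L : E) : Prop :=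
  ∀ ε > (0:ℝ), ∃ δ > (0:ℝ), ∀ s ∈ T, |s - t| < δ →
    ‖u (tsSigma T t) - u s - (tsSigma T t - s) • L‖ ≤ ε * |tsSigma T t - s|

/-- rd-continuity of `u` on the time scale `T`. -/
def RdContinuousOn {E : Type*} [NormedAddCommGroup E]
    (T : Set ℝ) (u : ℝ → E) : Prop :=
  (∀ t ∈ T, tsSigma T t = t → ContinuousWithinAt u T t) ∧
  (∀ t ∈ T, tsRho T t = t → ∃ L : E, Tendsto u (nhdsWithin t (T ∩ Iio t)) (nhds L))

/-- Auxiliary bound: apply a continuous linear functional inside a norm estimate. -/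
lemma fun_abs_bound_aux {E : Type*} [NormedAddCommGroup E] [NormedSpace ℝ E]
    (f : E →L[ℝ] ℝ) (x y z : E) (cst : ℝ) :
    |f x - f y - cst * f z| ≤ ‖f‖ * ‖x - y - cst • z‖ := by
  have h : f x - f y - cst * f z = f (x - y - cst • z) := by
    simp [map_sub, map_smul, smul_eq_mul]
  rw [h, ← Real.norm_eq_abs]
  exact f.le_opNorm _

/-- Real-valued mean value inequality via a time-scale induction argument. -/
lemma key_real_mvt (S : Set ℝ) (hSc : IsClosed S) (a t₀ : ℝ) (ha : a ∈ S) (ht₀ : t₀ ∈ S)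
    (hat : a ≤ t₀) (g : ℝ → ℝ) (c : ℝ) (sig : ℝ → ℝ)
    (hsig : ∀ t ∈ S, a ≤ t → t < t₀ → sig t ∈ S ∧ t ≤ sig t ∧ sig t ≤ t₀ ∧
      (sig t = t → ∀ δ > (0:ℝ), ∃ s ∈ S, t < s ∧ s < t + δ ∧ s ≤ t₀))
    (H1 : ∀ t ∈ S, a ≤ t → t < t₀ → ∃ L ≤ c, ∀ ε > (0:ℝ), ∃ δ > (0:ℝ), ∀ s ∈ S, |s - t| < δ →
      |g (sig t) - g s - (sig t - s) * L| ≤ ε * |sig t - s|)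
    (H2 : ∀ η > (0:ℝ), ∃ δ > (0:ℝ), ∀ s ∈ S, t₀ - δ < s → s < t₀ → g t₀ ≤ g s + η) :
    g t₀ - g a ≤ c * (t₀ - a) := by
  have main : ∀ ε > (0:ℝ), g t₀ - g a ≤ (c + ε) * (t₀ - a) := by
    intro ε hε
    set A : Set ℝ := {t | t ∈ S ∧ t ∈ Icc a t₀ ∧ g t - g a ≤ (c + ε) * (t - a)} with hA
    have haA : a ∈ A := by
      refine ⟨ha, ⟨le_refl a, hat⟩, by simp⟩
    have hAne : A.Nonempty := ⟨a, haA⟩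
    have hAbdd : BddAbove A := ⟨t₀, fun x hx => hx.2.1.2⟩
    set τ := sSup A with hτ
    have hτ_mem : τ ∈ S := by
      have h1 : τ ∈ closure A := csSup_mem_closure hAne hAbdd
      have h2 : closure A ⊆ S := hSc.closure_subset_iff.2 (fun x hx => hx.1)
      exact h2 h1
    have hτ_ge : a ≤ τ := le_csSup hAbdd haA
    have hτ_le : τ ≤ t₀ := csSup_le hAne (fun x hx => hx.2.1.2)
    -- Claim 1 : τ ∈ A
    have hτA : τ ∈ A := by
      by_contra hτA
      have hlim : ∀ δ > (0:ℝ), ∃ s ∈ A, τ - δ < s ∧ s < τ := by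
        intro δ hδ
        obtain ⟨s, hsA, hs⟩ := exists_lt_of_lt_csSup hAne (by linarith : τ - δ < τ)
        have hsle : s ≤ τ := le_csSup hAbdd hsA
        have : s ≠ τ := fun h => hτA (h ▸ hsA)
        exact ⟨s, hsA, hs, lt_of_le_of_ne hsle this⟩
      rcases eq_or_lt_of_le hτ_le with hcase | hcase
      · -- τ = t₀ : use H2
        apply hτA
        rw [hcase]
        refine ⟨ht₀, ⟨hat, le_refl _⟩, le_of_forall_pos_le_add ?_⟩
        intro η hη
        set K := |c + ε| with hK
        have hK0 : 0 ≤ K := abs_nonneg _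
        obtain ⟨δ, hδ, hH2⟩ := H2 (η/2) (by linarith)
        set δ' := min δ ((η/2)/(K+1)) with hδ'
        have hδ'pos : 0 < δ' := lt_min hδ (by positivity)
        obtain ⟨s, hsA, hs1, hs2⟩ := hlim δ' hδ'pos
        rw [hcase] at hs1 hs2
        have hsd : t₀ - δ < s := by
          have := min_le_left δ ((η/2)/(K+1)); linarith
        have h1 : g t₀ ≤ g s + η/2 := hH2 s hsA.1 hsd hs2
        have h2 : g s - g a ≤ (c + ε) * (s - a) := hsA.2.2
        have hts : t₀ - s < (η/2)/(K+1) := by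
          have := min_le_right δ ((η/2)/(K+1)); linarith
        have hq : (t₀ - s) * (K + 1) < η/2 := by
          rw [← lt_div_iff₀ (by linarith)]; exact hts
        have hKb : -(c + ε) ≤ K := by
          rw [hK]; exact neg_le_abs _
        have h3 : (c + ε) * (s - a) ≤ (c + ε) * (t₀ - a) + η/2 := by
          nlinarith [mul_nonneg hK0 (le_of_lt (sub_pos.2 hs2))]
        linarith
      · -- τ < t₀ : use H1
        obtain ⟨L, hL, hder⟩ := H1 τ hτ_mem hτ_ge hcase
        obtain ⟨δ, hδ, hd⟩ := hder ε hε
        obtain ⟨s, hsA, hs1, hs2⟩ := hlim δ hδ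
        obtain ⟨hσS, hσge, hσle, _⟩ := hsig τ hτ_mem hτ_ge hcase
        have habs : |s - τ| < δ := by rw [abs_sub_lt_iff]; constructor <;> linarith
        have hd1 := hd s hsA.1 habs
        have hnn : (0:ℝ) ≤ sig τ - s := by linarith
        rw [abs_of_nonneg hnn] at hd1
        have h2 : g (sig τ) ≤ g s + (sig τ - s) * L + ε * (sig τ - s) := by
          have := abs_le.1 hd1
          linarith [this.2]
        have h3 : (sig τ - s) * L ≤ (sig τ - s) * c := mul_le_mul_of_nonneg_left hL hnn
        have hσA : sig τ ∈ A := by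
          refine ⟨hσS, ⟨by linarith, hσle⟩, ?_⟩
          have := hsA.2.2
          nlinarith
        have : sig τ ≤ τ := le_csSup hAbdd hσA
        have hστ : sig τ = τ := le_antisymm this hσge
        exact hτA (hστ ▸ hσA)
    -- Claim 2 : τ = t₀
    have hτt₀ : τ = t₀ := by
      by_contra hne
      have hcase : τ < t₀ := lt_of_le_of_ne hτ_le hne
      obtain ⟨L, hL, hder⟩ := H1 τ hτ_mem hτ_ge hcase
      obtain ⟨δ, hδ, hd⟩ := hder ε hε
      obtain ⟨hσS, hσge, hσle, hdense⟩ := hsig τ hτ_mem hτ_ge hcase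
      rcases eq_or_lt_of_le hσge with hrd | hrs
      · -- right dense : sig τ = τ
        obtain ⟨s, hsS, hs1, hs2, hs3⟩ := hdense hrd.symm δ hδ
        have habs : |s - τ| < δ := by rw [abs_sub_lt_iff]; constructor <;> linarith
        have hd1 := hd s hsS habs
        rw [← hrd] at hd1
        have habs2 : |τ - s| = s - τ := by rw [abs_of_nonpos (by linarith)]; ring
        rw [habs2] at hd1
        have h2 : g s ≤ g τ + (s - τ) * L + ε * (s - τ) := by
          have := abs_le.1 hd1
          nlinarith [this.1]
        have hsA : s ∈ A := by
          refine ⟨hsS, ⟨by linarith, hs3⟩, ?_⟩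
          have := hτA.2.2
          nlinarith
        have : s ≤ τ := le_csSup hAbdd hsA
        linarith
      · -- right scattered : sig τ > τ
        have hd1 := hd τ hτ_mem (by simpa using hδ)
        have hnn : (0:ℝ) ≤ sig τ - τ := by linarith
        rw [abs_of_nonneg hnn] at hd1
        have h2 : g (sig τ) ≤ g τ + (sig τ - τ) * L + ε * (sig τ - τ) := by
          have := abs_le.1 hd1
          linarith [this.2]
        have hσA : sig τ ∈ A := by
          refine ⟨hσS, ⟨by linarith, hσle⟩, ?_⟩
          have := hτA.2.2
          nlinarith
        have : sig τ ≤ τ := le_csSup hAbdd hσA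
        linarith
    rw [hτt₀] at hτA
    exact hτA.2.2
  refine le_of_forall_pos_le_add ?_
  intro η hη
  have hε : (0:ℝ) < η / (t₀ - a + 1) := by
    apply div_pos hη; linarith
  have := main _ hε
  have h2 : η / (t₀ - a + 1) * (t₀ - a) ≤ η := by
    rw [div_mul_eq_mul_div, div_le_iff₀ (by linarith)]
    nlinarith
  nlinarith

/-- mean value theorem for the Cauchy Δ-integral. If `U` is an
antiderivative of the rd-continuous `u` on `[a,b]_T`, then
`∫_a^{t₀} u Δs = U t₀ - U a ∈ (t₀ - a) • closedConvexHull (u '' [a,t₀]_T)`. -/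
theorem deltaIntegral_mem_smul_closedConvexHull
    {E : Type*} [NormedAddCommGroup E] [NormedSpace ℝ E] [CompleteSpace E]
    (T : Set ℝ) (hT : T.Nonempty) (hTc : IsClosed T) (a b : ℝ)
    (ha : a ∈ T) (hb : b ∈ T) (hab : a ≤ b) (u U : ℝ → E)
    (hu : RdContinuousOn (T ∩ Set.Icc a b) u)
    (hU : ∀ t ∈ tsKappa (T ∩ Set.Icc a b),
      IsDeltaDerivAt (T ∩ Set.Icc a b) U t (u t)) :
    ∀ t₀ ∈ T ∩ Set.Icc a b,
      U t₀ - U a ∈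
        (t₀ - a) • closure (convexHull ℝ (u '' (T ∩ Set.Icc a t₀))) := by
  intro t₀ ht₀
  have ht₀T : t₀ ∈ T := ht₀.1
  have ht₀a : a ≤ t₀ := ht₀.2.1
  have ht₀b : t₀ ≤ b := ht₀.2.2
  set T' := T ∩ Set.Icc a b with hT'
  set S := T ∩ Set.Icc a t₀ with hS
  have hSsub : S ⊆ T' := by
    intro x hx
    exact ⟨hx.1, hx.2.1, le_trans hx.2.2 ht₀b⟩
  have hScl : IsClosed S := hTc.inter isClosed_Icc
  have hT'cl : IsClosed T' := hTc.inter isClosed_Icc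
  have haS : a ∈ S := ⟨ha, le_refl a, ht₀a⟩
  have ht₀S : t₀ ∈ S := ⟨ht₀T, ht₀a, le_refl t₀⟩
  have haT' : a ∈ T' := ⟨ha, le_refl a, hab⟩
  have ht₀T' : t₀ ∈ T' := hSsub ht₀S
  rcases eq_or_lt_of_le ht₀a with heq | hlt
  · -- degenerate case t₀ = a
    have hmem : u a ∈ closure (convexHull ℝ (u '' S)) :=
      subset_closure (subset_convexHull ℝ _ (mem_image_of_mem u haS))
    have h0 : U t₀ - U a = (t₀ - a) • (u a) := by
      rw [← heq]; simp
    rw [h0]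
    exact Set.smul_mem_smul_set hmem
  · -- main case a < t₀
    set C := closure (convexHull ℝ (u '' S)) with hC
    have hCconv : Convex ℝ C := (convex_convexHull ℝ _).closure
    have hCcl : IsClosed C := isClosed_closure
    have hpos : (0:ℝ) < t₀ - a := sub_pos.2 hlt
    have hne0 : t₀ - a ≠ 0 := ne_of_gt hpos
    rw [Set.mem_smul_set_iff_inv_smul_mem₀ hne0]
    by_contra hx
    obtain ⟨f, r, hfr, hrx⟩ := geometric_hahn_banach_closed_point hCconv hCcl hx
    have hub : ∀ s ∈ S, f (u s) < r := fun s hs =>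
      hfr _ (subset_closure (subset_convexHull ℝ _ (mem_image_of_mem u hs)))
    -- establish the hypotheses of the real lemma
    have hsig : ∀ t ∈ S, a ≤ t → t < t₀ → tsSigma T' t ∈ S ∧ t ≤ tsSigma T' t ∧
        tsSigma T' t ≤ t₀ ∧
        (tsSigma T' t = t → ∀ δ > (0:ℝ), ∃ s ∈ S, t < s ∧ s < t + δ ∧ s ≤ t₀) := by
      intro t htS hta htt₀
      set P := {s | s ∈ T' ∧ t < s} with hP
      have hPne : P.Nonempty := ⟨t₀, ht₀T', htt₀⟩
      have hPbdd : BddBelow P := ⟨t, fun s hs => le_of_lt hs.2⟩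
      have hsig_eq : tsSigma T' t = sInf P := by
        unfold tsSigma; rw [if_pos hPne]
      have h1 : sInf P ∈ T' := by
        have hc1 : sInf P ∈ closure P := csInf_mem_closure hPne hPbdd
        have hc2 : closure P ⊆ T' := hT'cl.closure_subset_iff.2 (fun x hx => hx.1)
        exact hc2 hc1
      have h2 : t ≤ sInf P := le_csInf hPne (fun s hs => le_of_lt hs.2)
      have h3 : sInf P ≤ t₀ := csInf_le hPbdd ⟨ht₀T', htt₀⟩
      rw [hsig_eq]
      refine ⟨⟨h1.1, le_trans hta h2, h3⟩, h2, h3, ?_⟩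
      intro hsteq δ hδ
      have : sInf P < t + δ := by rw [hsteq]; linarith
      obtain ⟨s, hsP, hsδ⟩ := exists_lt_of_csInf_lt hPne this
      rcases le_or_gt s t₀ with hle | hgt
      · exact ⟨s, ⟨hsP.1.1, le_trans hta (le_of_lt hsP.2), hle⟩, hsP.2, hsδ, hle⟩
      · exact ⟨t₀, ht₀S, htt₀, by linarith, le_refl t₀⟩
    have H1 : ∀ t ∈ S, a ≤ t → t < t₀ → ∃ L ≤ r, ∀ ε > (0:ℝ), ∃ δ > (0:ℝ), ∀ s ∈ S,
        |s - t| < δ → |f (U (tsSigma T' t)) - f (U s) - (tsSigma T' t - s) * L| ≤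
          ε * |tsSigma T' t - s| := by
      intro t htS hta htt₀
      have htκ : t ∈ tsKappa T' := by
        refine ⟨hSsub htS, ?_⟩
        intro hgr
        exact absurd (hgr.1.2 ht₀T') (not_le.2 htt₀)
      have hder := hU t htκ
      refine ⟨f (u t), le_of_lt (hub t htS), ?_⟩
      intro ε hε
      obtain ⟨δ, hδ, hd⟩ := hder (ε / (‖f‖ + 1)) (by positivity)
      refine ⟨δ, hδ, fun s hsS hsd => ?_⟩
      have hd1 := hd s (hSsub hsS) hsd
      have hstep := (fun_abs_bound_aux f (U (tsSigma T' t)) (U s) (u t)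
        (tsSigma T' t - s)).trans (mul_le_mul_of_nonneg_left hd1 (norm_nonneg f))
      have h5 : ‖f‖ * (ε / (‖f‖ + 1)) ≤ ε := by
        rw [mul_comm, div_mul_eq_mul_div, div_le_iff₀ (by positivity)]
        nlinarith [norm_nonneg f]
      have h6 : ‖f‖ * (ε / (‖f‖ + 1) * |tsSigma T' t - s|) ≤ ε * |tsSigma T' t - s| := by
        rw [← mul_assoc]
        exact mul_le_mul_of_nonneg_right h5 (abs_nonneg _)
      exact hstep.trans h6
    have H2 : ∀ η > (0:ℝ), ∃ δ > (0:ℝ), ∀ s ∈ S, t₀ - δ < s → s < t₀ →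
        f (U t₀) ≤ f (U s) + η := by
      intro η hη
      by_cases hκ : t₀ ∈ tsKappa T'
      · -- derivative available at t₀
        have hder := hU t₀ hκ
        set σ := tsSigma T' t₀ with hσ
        set N := ‖f‖ with hN
        set K := |σ - t₀| with hKdef
        set L₀ := f (u t₀) with hL₀
        have hN0 : 0 ≤ N := norm_nonneg f
        have hK0 : 0 ≤ K := abs_nonneg _
        set M := N * (2 * K + 1) with hM
        have hM0 : 0 ≤ M := by positivity
        set ε₀ := η / (2 * (M + 1)) with hε₀
        have hε₀pos : 0 < ε₀ := by positivity
        obtain ⟨δ, hδ, hd⟩ := hder ε₀ hε₀pos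
        set δ' := min (min δ 1) ((η/2)/(|L₀|+1)) with hδ'
        have hδ'pos : 0 < δ' := lt_min (lt_min hδ one_pos) (by positivity)
        refine ⟨δ', hδ'pos, ?_⟩
        intro s hsS hs1 hs2
        have hδ'δ : δ' ≤ δ := le_trans (min_le_left _ _) (min_le_left _ _)
        have hδ'1 : δ' ≤ 1 := le_trans (min_le_left _ _) (min_le_right _ _)
        have hδ'L : δ' ≤ (η/2)/(|L₀|+1) := min_le_right _ _
        have hts : t₀ - s < δ' := by linarith
        have hts0 : 0 ≤ t₀ - s := by linarith
        have hdt := hd t₀ ht₀T' (by simpa using hδ)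
        have hds := hd s (hSsub hsS) (by rw [abs_sub_lt_iff]; constructor <;> linarith)
        have hA : |f (U σ) - f (U t₀) - (σ - t₀) * L₀| ≤ N * (ε₀ * K) :=
          (fun_abs_bound_aux f (U σ) (U t₀) (u t₀) (σ - t₀)).trans
            (mul_le_mul_of_nonneg_left hdt hN0)
        have hB : |f (U σ) - f (U s) - (σ - s) * L₀| ≤ N * (ε₀ * |σ - s|) :=
          (fun_abs_bound_aux f (U σ) (U s) (u t₀) (σ - s)).trans
            (mul_le_mul_of_nonneg_left hds hN0)
        have habs : |σ - s| ≤ K + (t₀ - s) := by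
          have h := abs_sub_le σ t₀ s
          have : |t₀ - s| = t₀ - s := abs_of_nonneg hts0
          rw [this] at h
          exact h
        have habs2 : |σ - s| ≤ K + 1 := by linarith
        have hB2 : |f (U σ) - f (U s) - (σ - s) * L₀| ≤ N * (ε₀ * (K + 1)) := by
          refine hB.trans ?_
          have := mul_le_mul_of_nonneg_left habs2 (le_of_lt hε₀pos)
          exact mul_le_mul_of_nonneg_left this hN0
        -- combine
        have hcomb : f (U t₀) - f (U s) ≤ (t₀ - s) * L₀ + N * (ε₀ * (K + 1)) + N * (ε₀ * K) := by
          have h1 := (abs_le.1 hA).1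
          have h2 := (abs_le.1 hB2).2
          have hring : (σ - t₀) * L₀ - (σ - s) * L₀ = -((t₀ - s) * L₀) := by ring
          linarith
        have hMe : M * ε₀ ≤ η / 2 := by
          have h1 : ε₀ * (M + 1) = η / 2 := by
            rw [hε₀]; field_simp
          have h2 : M * ε₀ ≤ (M + 1) * ε₀ :=
            mul_le_mul_of_nonneg_right (by linarith) hε₀pos.le
          have h3 : (M + 1) * ε₀ = η / 2 := by rw [mul_comm]; exact h1
          linarith
        have hsum : N * (ε₀ * (K + 1)) + N * (ε₀ * K) = M * ε₀ := by
          rw [hM]; ring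
        have hLbound : (t₀ - s) * L₀ ≤ η / 2 := by
          have hq : (t₀ - s) * (|L₀| + 1) < η / 2 := by
            rw [← lt_div_iff₀ (by positivity)]
            linarith
          have h1 : (t₀ - s) * L₀ ≤ (t₀ - s) * |L₀| :=
            mul_le_mul_of_nonneg_left (le_abs_self L₀) hts0
          have h2 : (t₀ - s) * |L₀| ≤ (t₀ - s) * (|L₀| + 1) :=
            mul_le_mul_of_nonneg_left (by linarith) hts0
          linarith
        linarith [hcomb, hMe, hLbound, hsum]
      · -- t₀ is a left-scattered maximum : vacuous for small δ
        have ht₀mem : t₀ ∈ {t | IsGreatest T' t ∧ tsRho T' t < t} := by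
          by_contra hcon
          exact hκ ⟨ht₀T', hcon⟩
        have hρlt : tsRho T' t₀ < t₀ := ht₀mem.2
        set Q := {s | s ∈ T' ∧ s < t₀} with hQ
        have hQne : Q.Nonempty := ⟨a, haT', hlt⟩
        have hQbdd : BddAbove Q := ⟨t₀, fun s hs => le_of_lt hs.2⟩
        have hρ_eq : tsRho T' t₀ = sSup Q := by
          unfold tsRho; rw [if_pos hQne]
        rw [hρ_eq] at hρlt
        refine ⟨t₀ - sSup Q, by linarith, ?_⟩
        intro s hsS hs1 hs2
        have : s ≤ sSup Q := le_csSup hQbdd ⟨hSsub hsS, hs2⟩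
        linarith
    have key := key_real_mvt S hScl a t₀ haS ht₀S ht₀a (fun x => f (U x)) r
      (tsSigma T') hsig H1 H2
    -- contradiction
    have hfx : f ((t₀ - a)⁻¹ • (U t₀ - U a)) = (t₀ - a)⁻¹ * (f (U t₀) - f (U a)) := by
      simp [map_sub, smul_eq_mul]
    rw [hfx] at hrx
    have h2 : r * (t₀ - a) < (t₀ - a)⁻¹ * (f (U t₀) - f (U a)) * (t₀ - a) :=
      mul_lt_mul_of_pos_right hrx hpos
    have h3 : (t₀ - a)⁻¹ * (f (U t₀) - f (U a)) * (t₀ - a) = f (U t₀) - f (U a) := by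
      field_simp
    rw [h3] at h2
    linarith
end

section
/- There exists a time scale T, namely T = [0, 1/2] ∪ [3/4, 1], and a function u : T → ℝ (u(3/4) = 1 and u = 0 elsewhere) such that u satisfies the weakened finite-cover condition (without the clause 's,t ≥ τⱼ') for every ε > 0, yet u is not rd-continuous on T. -/
open Set Filter

/-- The time scale `[0,1/2] ∪ [3/4,1]`. -/
noncomputable def T9 : Set ℝ := Set.Icc 0 (1/2) ∪ Set.Icc (3/4) 1

open Classical in
/-- The function with `u(3/4) = 1` and `u = 0` elsewhere. -/
noncomputable def u9 : ℝ → ℝ := fun t => if t = 3/4 then 1 else 0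

/-!
`u9` is zero except at `3/4`, which is right-dense in `T9`, so rd-continuity demands continuity
there and the jump breaks it. The cover condition nevertheless holds with nodes `0, 1/2, 1`:
the only window containing `3/4` is that of `1/2`, and since `1/2` is right-scattered, only points
`s, t < 1/2` are compared on it.
-/

open Topology

theorem tsSigma_eq_of_isLeast {T : Set ℝ} {t b : ℝ} (h : IsLeast {s | s ∈ T ∧ t < s} b) :
    tsSigma T t = b := by
  rw [tsSigma, if_pos ⟨b, h.1⟩, h.csInf_eq]

theorem tsSigma_eq_self_of_Ioo_subset {T : Set ℝ} {t b : ℝ} (htb : t < b) (hT : Ioo t b ⊆ T) :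
    tsSigma T t = t := by
  have hsub : Ioo t b ⊆ {s | s ∈ T ∧ t < s} := fun s hs => ⟨hT hs, hs.1⟩
  have hne : (Ioo t b).Nonempty := nonempty_Ioo.2 htb
  rw [tsSigma, if_pos (hne.mono hsub)]
  refine le_antisymm ?_ (le_csInf (hne.mono hsub) fun s hs => hs.2.le)
  calc sInf {s | s ∈ T ∧ t < s} ≤ sInf (Ioo t b) :=
        csInf_le_csInf ⟨t, fun s hs => hs.2.le⟩ hne hsub
    _ = t := csInf_Ioo htb

theorem eq_of_continuousWithinAt_of_eqOn_Ioo {X : Type*} [TopologicalSpace X] [T2Space X]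
    {T : Set ℝ} {u : ℝ → X} {t b : ℝ} {c : X} (hu : ContinuousWithinAt u T t) (htb : t < b)
    (hT : Ioo t b ⊆ T) (hc : EqOn u (fun _ => c) (Ioo t b)) : u t = c := by
  have : (𝓝[Ioo t b] t).NeBot := left_nhdsWithin_Ioo_neBot htb
  have hlim : Tendsto u (𝓝[Ioo t b] t) (𝓝 (u t)) := hu.mono_left (nhdsWithin_mono _ hT)
  have hconst : Tendsto u (𝓝[Ioo t b] t) (𝓝 c) :=
    tendsto_const_nhds.congr' (eventuallyEq_nhdsWithin_of_eqOn hc).symm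
  exact tendsto_nhds_unique hlim hconst

theorem not_rdContinuousOn_of_ne_eqOn_Ioo {E : Type*} [NormedAddCommGroup E]
    {T : Set ℝ} {u : ℝ → E} {t b : ℝ} {c : E} (ht : t ∈ T) (htb : t < b) (hT : Ioo t b ⊆ T)
    (hc : EqOn u (fun _ => c) (Ioo t b)) (hjump : u t ≠ c) : ¬ RdContinuousOn T u := fun hu =>
  hjump <| eq_of_continuousWithinAt_of_eqOn_Ioo
    (hu.1 t ht (tsSigma_eq_self_of_Ioo_subset htb hT)) htb hT hc

theorem u9_eq_zero {x : ℝ} (h : x ≠ 3/4) : u9 x = 0 := if_neg h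

theorem Ioo_three_quarters_one_subset_T9 : Ioo (3/4 : ℝ) 1 ⊆ T9 :=
  fun _ hx => Or.inr ⟨hx.1.le, hx.2.le⟩

theorem tsSigma_T9_half : tsSigma T9 (1/2) = 3/4 := by
  refine tsSigma_eq_of_isLeast ⟨⟨Or.inr ⟨le_rfl, by norm_num⟩, by norm_num⟩, ?_⟩
  rintro s ⟨hs | hs, hlt⟩
  · exact (hlt.not_ge hs.2).elim
  · exact hs.1

theorem not_rdContinuousOn_T9_u9 : ¬ RdContinuousOn T9 u9 :=
  not_rdContinuousOn_of_ne_eqOn_Ioo (Or.inr ⟨le_rfl, by norm_num⟩) (by norm_num)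
    Ioo_three_quarters_one_subset_T9 (fun _ hx => u9_eq_zero hx.1.ne') (by norm_num [u9])

namespace T9

noncomputable def nodes : Fin 3 → ℝ := ![0, 1/2, 1]

noncomputable def radii : Fin 3 → ℝ := ![3/10, 3/10, 1/4]

theorem nodes_mem (i : Fin 3) : nodes i ∈ T9 := by
  fin_cases i <;> norm_num [nodes, T9]

theorem strictMono_nodes : StrictMono nodes := by
  refine Fin.strictMono_iff_lt_succ.2 fun i => ?_
  fin_cases i <;> norm_num [nodes, Matrix.cons_val_two]

theorem radii_pos (i : Fin 3) : 0 < radii i := by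
  fin_cases i <;> norm_num [radii]

theorem subset_iUnion_windows : T9 ⊆ ⋃ i, Ioo (nodes i - radii i) (nodes i + radii i) := by
  intro x hx
  rw [mem_iUnion]
  rcases hx with ⟨h0, h1⟩ | ⟨h0, h1⟩
  · rcases lt_or_ge x (3/10) with hx | hx
    · exact ⟨0, by simp [nodes, radii]; constructor <;> linarith⟩
    · exact ⟨1, by simp [nodes, radii]; constructor <;> linarith⟩
  · rcases lt_or_ge x (4/5) with hx | hx
    · exact ⟨1, by simp [nodes, radii]; constructor <;> linarith⟩
    · exact ⟨2, by simp [nodes, radii]; constructor <;> linarith⟩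

theorem ne_three_quarters_of_mem_window {j : Fin 3} {x : ℝ}
    (hx : x ∈ Ioo (nodes j - radii j) (nodes j + radii j))
    (h : tsSigma T9 (nodes j) = nodes j ∨ x < nodes j) : x ≠ 3/4 := by
  rintro rfl
  fin_cases j
  · norm_num [nodes, radii] at hx
  · norm_num [nodes, tsSigma_T9_half] at h
  · norm_num [nodes, radii] at hx

end T9

/-- `u9` satisfies the weakened finite-cover condition (without the
clause `s,t ≥ τⱼ`) on `T9`, yet it is not rd-continuous on `T9`. -/
theorem weakened_cover_not_rdContinuous :
    (∀ ε > (0:ℝ), ∃ n : ℕ, ∃ τ : Fin (n+1) → ℝ, ∃ δ : Fin (n+1) → ℝ,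
      (∀ i, τ i ∈ T9) ∧ StrictMono τ ∧
      τ 0 = 0 ∧ τ (Fin.last n) = 1 ∧ (∀ i, 0 < δ i) ∧
      (T9 ⊆ ⋃ i, Set.Ioo (τ i - δ i) (τ i + δ i)) ∧
      ∀ j : Fin (n+1),
        ∀ s ∈ T9 ∩ Set.Ioo (τ j - δ j) (τ j + δ j),
        ∀ t ∈ T9 ∩ Set.Ioo (τ j - δ j) (τ j + δ j),
          (tsSigma T9 (τ j) = τ j ∨ (s < τ j ∧ t < τ j)) →
          |u9 s - u9 t| < ε) ∧
    ¬ RdContinuousOn T9 u9 := by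
  refine ⟨fun ε hε => ⟨2, T9.nodes, T9.radii, T9.nodes_mem, T9.strictMono_nodes, rfl,
      by simp [T9.nodes, Fin.last], T9.radii_pos, T9.subset_iUnion_windows, ?_⟩,
    not_rdContinuousOn_T9_u9⟩
  intro j s hs t ht h
  have hs' := T9.ne_three_quarters_of_mem_window hs.2 (h.imp_right And.left)
  have ht' := T9.ne_three_quarters_of_mem_window ht.2 (h.imp_right And.right)
  simpa [u9_eq_zero hs', u9_eq_zero ht'] using hε
end

section
/- Grönwall-type linear functions are Kamke Δ-functions: let q : [a,b]_T → ℝ be nonnegative and rd-continuous, and define w(t,x) := q(t)·x. Then the only nonnegative continuous u : [a,b]_T → ℝ satisfying u(t) ≤ ∫_a^t q(s)·u(s) Δs for all t ∈ [a,b]_T is u ≡ 0. -/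
open Set Filter

namespace KamkeAux

lemma le_zero_of_forall_le_mul {x y : ℝ} (hy : 0 ≤ y) (h : ∀ ε > (0:ℝ), x ≤ ε * y) :
    x ≤ 0 := by
  by_contra hx
  push_neg at hx
  have h2 := h (x / (2 * (y + 1))) (by positivity)
  have heq : x / (2 * (y + 1)) * y ≤ x / 2 := by
    rw [div_mul_eq_mul_div, div_le_div_iff₀ (by positivity) (by norm_num)]
    nlinarith
  linarith

lemma sigma_le {S : Set ℝ} {t s : ℝ} (hs : s ∈ S) (hts : t < s) : tsSigma S t ≤ s := by
  have hne : {x | x ∈ S ∧ t < x}.Nonempty := ⟨s, hs, hts⟩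
  rw [tsSigma, if_pos hne]
  exact csInf_le ⟨t, fun x hx => le_of_lt hx.2⟩ ⟨hs, hts⟩

lemma sigma_spec {S : Set ℝ} (hS : IsClosed S) {t c : ℝ} (hc : c ∈ S) (htc : t < c) :
    tsSigma S t ∈ S ∧ t ≤ tsSigma S t ∧ tsSigma S t ≤ c := by
  have hne : {s | s ∈ S ∧ t < s}.Nonempty := ⟨c, hc, htc⟩
  have hbdd : BddBelow {s | s ∈ S ∧ t < s} := ⟨t, fun x hx => le_of_lt hx.2⟩
  have hσ : tsSigma S t = sInf {s | s ∈ S ∧ t < s} := by rw [tsSigma, if_pos hne]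
  refine ⟨?_, ?_, sigma_le hc htc⟩
  · have h1 : sInf {s | s ∈ S ∧ t < s} ∈ closure {s | s ∈ S ∧ t < s} :=
      csInf_mem_closure hne hbdd
    have h2 : closure {s | s ∈ S ∧ t < s} ⊆ S := by
      calc closure {s | s ∈ S ∧ t < s} ⊆ closure S :=
            closure_mono (fun x hx => hx.1)
        _ = S := hS.closure_eq
    rw [hσ]; exact h2 h1
  · rw [hσ]; exact le_csInf hne fun x hx => le_of_lt hx.2

lemma sigma_dense {S : Set ℝ} {t : ℝ} (hne : {s | s ∈ S ∧ t < s}.Nonempty)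
    (hσ : tsSigma S t = t) {δ : ℝ} (hδ : 0 < δ) : ∃ s, s ∈ S ∧ t < s ∧ s < t + δ := by
  have h : sInf {s | s ∈ S ∧ t < s} = t := by rwa [tsSigma, if_pos hne] at hσ
  have h2 : sInf {s | s ∈ S ∧ t < s} < t + δ := by rw [h]; linarith
  obtain ⟨s, hs, hlt⟩ := exists_lt_of_csInf_lt hne h2
  exact ⟨s, hs.1, hs.2, hlt⟩

lemma deriv_sigma_eq {S : Set ℝ} {W : ℝ → ℝ} {t L : ℝ} (ht : t ∈ S)
    (hd : IsDeltaDerivAt S W t L) :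
    W (tsSigma S t) = W t + (tsSigma S t - t) * L := by
  set σ := tsSigma S t with hσdef
  have key : ∀ ε > (0:ℝ), |W σ - W t - (σ - t) * L| ≤ ε * |σ - t| := by
    intro ε hε
    obtain ⟨δ, hδ, h⟩ := hd ε hε
    have h1 := h t ht (by simpa using hδ)
    rwa [Real.norm_eq_abs, smul_eq_mul] at h1
  have h0 : |W σ - W t - (σ - t) * L| ≤ 0 :=
    le_zero_of_forall_le_mul (abs_nonneg _) key
  have : W σ - W t - (σ - t) * L = 0 := abs_eq_zero.mp (le_antisymm h0 (abs_nonneg _))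
  linarith


lemma deriv_continuousWithinAt {S : Set ℝ} {W : ℝ → ℝ} {t L : ℝ} (ht : t ∈ S)
    (hd : IsDeltaDerivAt S W t L) : ContinuousWithinAt W S t := by
  rw [Metric.continuousWithinAt_iff]
  intro ε hε
  set σ := tsSigma S t with hσdef
  have hσW := deriv_sigma_eq ht hd
  set M := |σ - t| + 1 with hM
  have hMpos : 0 < M := by positivity
  obtain ⟨δ, hδ, h⟩ := hd (ε / (4 * M)) (by positivity)
  refine ⟨min δ (min 1 (ε / (4 * (|L| + 1)))), by positivity, ?_⟩
  intro s hs hdist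
  rw [Real.dist_eq] at hdist ⊢
  have h1 := h s hs (lt_of_lt_of_le hdist (min_le_left _ _))
  rw [Real.norm_eq_abs, smul_eq_mul] at h1
  have h2 : |W t - W s + (s - t) * L| ≤ ε / (4 * M) * |σ - s| := by
    have heq : W σ - W s - (σ - s) * L = W t - W s + (s - t) * L := by
      rw [hσW]; ring
    rwa [heq] at h1
  have hst1 : |s - t| < 1 :=
    lt_of_lt_of_le hdist (le_trans (min_le_right _ _) (min_le_left _ _))
  have hstε : |s - t| ≤ ε / (4 * (|L| + 1)) :=
    le_of_lt (lt_of_lt_of_le hdist (le_trans (min_le_right _ _) (min_le_right _ _)))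
  have hσs : |σ - s| ≤ |σ - t| + |s - t| := by
    calc |σ - s| = |(σ - t) + (t - s)| := by ring_nf
      _ ≤ |σ - t| + |t - s| := abs_add_le _ _
      _ = |σ - t| + |s - t| := by rw [abs_sub_comm t s]
  have h3 : |W s - W t| ≤ |s - t| * |L| + ε / (4 * M) * |σ - s| := by
    have heq : W s - W t = (s - t) * L - (W t - W s + (s - t) * L) := by ring
    calc |W s - W t| = |(s - t) * L - (W t - W s + (s - t) * L)| := by rw [← heq]
      _ ≤ |(s - t) * L| + |W t - W s + (s - t) * L| := abs_sub _ _
      _ = |s - t| * |L| + |W t - W s + (s - t) * L| := by rw [abs_mul]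
      _ ≤ |s - t| * |L| + ε / (4 * M) * |σ - s| := by linarith
  have hb1 : |s - t| * |L| ≤ ε / 4 := by
    have hL0 : (0:ℝ) ≤ |L| := abs_nonneg _
    calc |s - t| * |L| ≤ ε / (4 * (|L| + 1)) * |L| := by
          apply mul_le_mul_of_nonneg_right hstε hL0
      _ ≤ ε / 4 := by
          rw [div_mul_eq_mul_div, div_le_div_iff₀ (by positivity) (by norm_num)]
          nlinarith
  have hb2 : ε / (4 * M) * |σ - s| ≤ ε / 4 := by
    have : |σ - s| ≤ M := by rw [hM]; linarith
    calc ε / (4 * M) * |σ - s| ≤ ε / (4 * M) * M := by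
          apply mul_le_mul_of_nonneg_left this (by positivity)
      _ = ε / 4 := by field_simp
  linarith

lemma cwa_of_left_scattered_max {S : Set ℝ} {t : ℝ}
    (hmax : IsGreatest S t) (hρ : tsRho S t < t) (W : ℝ → ℝ) :
    ContinuousWithinAt W S t := by
  set r := tsRho S t with hr
  have hsub : ∀ s ∈ S, r < s → s = t := by
    intro s hsS hsr
    have hst : s ≤ t := hmax.2 hsS
    rcases eq_or_lt_of_le hst with h | h
    · exact h
    · exfalso
      have hne : {x | x ∈ S ∧ x < t}.Nonempty := ⟨s, hsS, h⟩
      have hre : r = sSup {x | x ∈ S ∧ x < t} := by rw [hr, tsRho, if_pos hne]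
      have hbdd : BddAbove {x | x ∈ S ∧ x < t} := ⟨t, fun x hx => le_of_lt hx.2⟩
      have hsle : s ≤ r := hre ▸ le_csSup hbdd ⟨hsS, h⟩
      exact absurd hsr (not_lt.mpr hsle)
  have hev : ∀ᶠ s in nhdsWithin t S, W s = W t := by
    filter_upwards [mem_nhdsWithin_of_mem_nhds (Ioi_mem_nhds hρ), self_mem_nhdsWithin]
      with s hs1 hs2
    rw [hsub s hs2 hs1]
  exact Filter.Tendsto.congr' (hev.mono fun s h => h.symm) tendsto_const_nhds


lemma growth_aux {S : Set ℝ} (hS : IsClosed S) {W L : ℝ → ℝ} {K α β : ℝ}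
    (hα : α ∈ S) (hβ : β ∈ S) (hαβ : α ≤ β)
    (hWc : ∀ t ∈ S, ContinuousWithinAt W S t)
    (hd : ∀ t ∈ S, α ≤ t → t < β → IsDeltaDerivAt S W t (L t))
    (hK : ∀ t ∈ S, α ≤ t → t < β → L t ≤ K)
    {ε : ℝ} (hε : 0 < ε) :
    W β - W α ≤ (K + ε) * (β - α) := by
  set C := {t | t ∈ S ∧ t ∈ Icc α β ∧ W t - W α ≤ (K + ε) * (t - α)} with hCdef
  have hαC : α ∈ C := ⟨hα, ⟨le_refl _, hαβ⟩, by simp⟩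
  have hCne : C.Nonempty := ⟨α, hαC⟩
  have hCbdd : BddAbove C := ⟨β, fun x hx => hx.2.1.2⟩
  set c := sSup C with hcdef
  have hcclosure : c ∈ closure C := csSup_mem_closure hCne hCbdd
  have hCS : C ⊆ S := fun x hx => hx.1
  have hcS : c ∈ S := by
    have := closure_mono hCS hcclosure
    rwa [hS.closure_eq] at this
  have hαc : α ≤ c := le_csSup hCbdd hαC
  have hcβ : c ≤ β := csSup_le hCne fun x hx => hx.2.1.2
  have hcW : W c - W α ≤ (K + ε) * (c - α) := by
    have hnb : (nhdsWithin c C).NeBot := mem_closure_iff_nhdsWithin_neBot.mp hcclosure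
    have h1 : Tendsto W (nhdsWithin c C) (nhds (W c)) :=
      (hWc c hcS).mono_left (nhdsWithin_mono _ hCS)
    have h2 : Tendsto (fun t => W α + (K + ε) * (t - α)) (nhdsWithin c C)
        (nhds (W α + (K + ε) * (c - α))) := by
      apply Tendsto.mono_left _ nhdsWithin_le_nhds
      exact (continuous_const.add (continuous_const.mul
        (continuous_id.sub continuous_const))).tendsto c
    have h3 : ∀ᶠ t in nhdsWithin c C, W t ≤ W α + (K + ε) * (t - α) :=
      eventually_nhdsWithin_of_forall fun t ht => by
        have := ht.2.2; linarith
    have := le_of_tendsto_of_tendsto h1 h2 h3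
    linarith
  have hcC : c ∈ C := ⟨hcS, ⟨hαc, hcβ⟩, hcW⟩
  rcases eq_or_lt_of_le hcβ with hcb | hcb
  · rw [← hcb]; exact hcW
  exfalso
  have hder := hd c hcS hαc hcb
  have hLc := hK c hcS hαc hcb
  have hne : {s | s ∈ S ∧ c < s}.Nonempty := ⟨β, hβ, hcb⟩
  obtain ⟨hσS, hcσ, hσβ⟩ := sigma_spec hS hβ hcb
  rcases eq_or_lt_of_le hcσ with hσc | hσc
  · -- right dense
    obtain ⟨δ, hδ, hh⟩ := hder ε hε
    obtain ⟨s, hsS, hcs, hsδ⟩ :=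
      sigma_dense hne hσc.symm (lt_min hδ (by linarith : (0:ℝ) < β - c))
    have hsβ : s < β := by
      have := min_le_right δ (β - c); linarith
    have hsδ' : |s - c| < δ := by
      rw [abs_of_pos (by linarith : (0:ℝ) < s - c)]
      have := min_le_left δ (β - c); linarith
    have h1 := hh s hsS hsδ'
    rw [Real.norm_eq_abs, smul_eq_mul, ← hσc] at h1
    have h2 : |W c - W s - (c - s) * L c| ≤ ε * (s - c) := by
      rwa [abs_of_neg (by linarith : c - s < 0), neg_sub] at h1
    have h3 : W s ≤ W c + (s - c) * L c + ε * (s - c) := by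
      have := abs_le.mp h2
      nlinarith [this.1]
    have hsC : s ∈ C := by
      refine ⟨hsS, ⟨by linarith, le_of_lt hsβ⟩, ?_⟩
      nlinarith [hcW, hLc]
    have : s ≤ c := le_csSup hCbdd hsC
    linarith
  · -- right scattered
    have hWσ := deriv_sigma_eq hcS hder
    have hσC : tsSigma S c ∈ C := by
      refine ⟨hσS, ⟨by linarith, hσβ⟩, ?_⟩
      rw [hWσ]
      nlinarith [hcW, hLc]
    have : tsSigma S c ≤ c := le_csSup hCbdd hσC
    linarith

lemma growth {S : Set ℝ} (hS : IsClosed S) {W L : ℝ → ℝ} {K α β : ℝ}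
    (hα : α ∈ S) (hβ : β ∈ S) (hαβ : α ≤ β)
    (hWc : ∀ t ∈ S, ContinuousWithinAt W S t)
    (hd : ∀ t ∈ S, α ≤ t → t < β → IsDeltaDerivAt S W t (L t))
    (hK : ∀ t ∈ S, α ≤ t → t < β → L t ≤ K) :
    W β - W α ≤ K * (β - α) := by
  have h0 : W β - W α - K * (β - α) ≤ 0 := by
    apply le_zero_of_forall_le_mul (by linarith : (0:ℝ) ≤ β - α)
    intro ε hε
    have := growth_aux hS hα hβ hαβ hWc hd hK hε
    nlinarith
  linarith

end KamkeAux

open KamkeAux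

/-- Grönwall-type / Kamke property of `w(t,x) = q(t)·x`: if `q` is
nonnegative and rd-continuous on `[a,b]_T`, and `u` is nonnegative, continuous
and satisfies `u(t) ≤ ∫_a^t q(s)·u(s) Δs` for all `t ∈ [a,b]_T` (the Δ-integral
given by an antiderivative `W` of `q·u`), then `u ≡ 0` on `[a,b]_T`. -/
theorem kamke_of_linear_gronwall
    (T : Set ℝ) (hT : T.Nonempty) (hTc : IsClosed T) (a b : ℝ)
    (ha : a ∈ T) (hb : b ∈ T) (hab : a ≤ b)
    (q : ℝ → ℝ) (hq0 : ∀ t ∈ T ∩ Set.Icc a b, 0 ≤ q t)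
    (hq : RdContinuousOn (T ∩ Set.Icc a b) q)
    (u : ℝ → ℝ) (hu : ContinuousOn u (T ∩ Set.Icc a b))
    (hu0 : ∀ t ∈ T ∩ Set.Icc a b, 0 ≤ u t)
    (W : ℝ → ℝ)
    (hW : ∀ t ∈ tsKappa (T ∩ Set.Icc a b),
      IsDeltaDerivAt (T ∩ Set.Icc a b) W t (q t * u t))
    (hineq : ∀ t ∈ T ∩ Set.Icc a b, u t ≤ W t - W a) :
    ∀ t ∈ T ∩ Set.Icc a b, u t = 0 := by
  set S := T ∩ Set.Icc a b with hSdef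
  have hSclosed : IsClosed S := hTc.inter isClosed_Icc
  have haS : a ∈ S := ⟨ha, le_refl a, hab⟩
  have hbS : b ∈ S := ⟨hb, hab, le_refl b⟩
  have hSub : ∀ t ∈ S, t ≤ b := fun t ht => ht.2.2
  have hSlb : ∀ t ∈ S, a ≤ t := fun t ht => ht.2.1
  -- every non-maximal point of S is in S^κ
  have hkappa : ∀ t ∈ S, t < b → t ∈ tsKappa S := by
    intro t ht htb
    refine ⟨ht, ?_⟩
    intro hg
    exact absurd (hg.1.2 hbS) (not_le.mpr htb)
  -- continuity of W on S
  have hWc : ∀ t ∈ S, ContinuousWithinAt W S t := by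
    intro t htS
    by_cases hk : t ∈ tsKappa S
    · exact deriv_continuousWithinAt htS (hW t hk)
    · have hg : IsGreatest S t ∧ tsRho S t < t := by
        by_contra hgg
        exact hk ⟨htS, hgg⟩
      exact cwa_of_left_scattered_max hg.1 hg.2 W
  -- the downward-closed zero set
  set B := {t | t ∈ S ∧ ∀ s ∈ S, s ≤ t → W s ≤ W a} with hBdef
  have haB : a ∈ B := by
    refine ⟨haS, fun s hs hsa => ?_⟩
    have : s = a := le_antisymm hsa (hSlb s hs)
    rw [this]
  have hBne : B.Nonempty := ⟨a, haB⟩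
  have hBbdd : BddAbove B := ⟨b, fun x hx => hSub x hx.1⟩
  set c := sSup B with hcdef
  have hcclosure : c ∈ closure B := csSup_mem_closure hBne hBbdd
  have hBS : B ⊆ S := fun x hx => hx.1
  have hcS : c ∈ S := by
    have := closure_mono hBS hcclosure
    rwa [hSclosed.closure_eq] at this
  have hac : a ≤ c := le_csSup hBbdd haB
  have hcb : c ≤ b := hSub c hcS
  have hBmem : ∀ t ∈ B, W t ≤ W a := fun t ht => ht.2 t ht.1 le_rfl
  have hcB : c ∈ B := by
    refine ⟨hcS, fun s hsS hsc => ?_⟩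
    rcases lt_or_eq_of_le hsc with h | h
    · obtain ⟨t, htB, hst⟩ := exists_lt_of_lt_csSup hBne h
      exact htB.2 s hsS (le_of_lt hst)
    · have hnb : (nhdsWithin c B).NeBot := mem_closure_iff_nhdsWithin_neBot.mp hcclosure
      have h1 : Tendsto W (nhdsWithin c B) (nhds (W c)) :=
        (hWc c hcS).mono_left (nhdsWithin_mono _ hBS)
      have h2 : W c ≤ W a :=
        le_of_tendsto h1 (eventually_nhdsWithin_of_forall fun t ht => hBmem t ht)
      rw [h]; exact h2
  have key : ∀ s ∈ S, s ≤ c → u s = 0 ∧ W s = W a := by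
    intro s hs hsc
    have h1 : W s ≤ W a := hcB.2 s hs hsc
    have h2 : u s ≤ W s - W a := hineq s hs
    have h3 : 0 ≤ u s := hu0 s hs
    exact ⟨le_antisymm (by linarith) h3, le_antisymm h1 (by linarith)⟩
  -- show c = b
  have hcbeq : c = b := by
    by_contra hne'
    have hcbe : c < b := lt_of_le_of_ne hcb hne'
    have hck : c ∈ tsKappa S := hkappa c hcS hcbe
    have hder := hW c hck
    have huc : u c = 0 := (key c hcS le_rfl).1
    have hWca : W c = W a := (key c hcS le_rfl).2
    have hL0 : q c * u c = 0 := by rw [huc]; ring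
    rw [hL0] at hder
    have hne : {s | s ∈ S ∧ c < s}.Nonempty := ⟨b, hbS, hcbe⟩
    obtain ⟨hσS, hcσ, hσb⟩ := sigma_spec hSclosed hbS hcbe
    rcases eq_or_lt_of_le hcσ with hσc | hσc
    · -- right dense: Grönwall step
      have hqc : ContinuousWithinAt q S c := hq.1 c hcS hσc.symm
      set Q := q c + 1 with hQdef
      have hQ : 0 < Q := by have := hq0 c hcS; linarith
      have hmem : q ⁻¹' Iio Q ∈ nhdsWithin c S :=
        hqc (Iio_mem_nhds (by linarith : q c < Q))
      obtain ⟨δ₁, hδ₁, hball⟩ := Metric.mem_nhdsWithin_iff.mp hmem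
      set δ := min δ₁ (1 / (2 * Q)) with hδdef
      have hδpos : 0 < δ := lt_min hδ₁ (by positivity)
      obtain ⟨t, htS, hct, htδ⟩ := sigma_dense hne hσc.symm hδpos
      have hqbound : ∀ r ∈ S, c ≤ r → r ≤ t → q r < Q := by
        intro r hr h1 h2
        apply hball
        constructor
        · rw [Metric.mem_ball, Real.dist_eq, abs_of_nonneg (by linarith : (0:ℝ) ≤ r - c)]
          have := min_le_left δ₁ (1 / (2 * Q))
          linarith
        · exact hr
      -- max of u on S ∩ Icc c t
      have hKcomp : IsCompact (S ∩ Icc c t) := isCompact_Icc.inter_left hSclosed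
      have hKne : (S ∩ Icc c t).Nonempty := ⟨c, hcS, le_rfl, le_of_lt hct⟩
      have hucont : ContinuousOn u (S ∩ Icc c t) := hu.mono inter_subset_left
      obtain ⟨x, hxK, hxmax⟩ := hKcomp.exists_isMaxOn hKne hucont
      set m := u x with hmdef
      have hm0 : 0 ≤ m := hu0 x hxK.1
      have hQm : 0 ≤ Q * m := by positivity
      -- growth bound on [c, s] for s ∈ S ∩ Icc c t
      have hgrow : ∀ s ∈ S, c ≤ s → s ≤ t → W s - W c ≤ Q * m * (s - c) := by
        intro s hsS hcs hst
        apply growth (L := fun r => q r * u r) hSclosed hcS hsS hcs hWc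
        · intro r hr h1 h2
          exact hW r (hkappa r hr (lt_of_lt_of_le h2 (le_trans hst (hSub t htS))))
        · intro r hr h1 h2
          have hqr := hqbound r hr h1 (le_trans (le_of_lt h2) hst)
          have hur : u r ≤ m := hxmax ⟨hr, h1, le_trans (le_of_lt h2) hst⟩
          have hur0 : 0 ≤ u r := hu0 r hr
          have hqr0 : 0 ≤ q r := hq0 r hr
          nlinarith
      have hmhalf : Q * (t - c) ≤ 1 / 2 := by
        have h1 : t - c < 1 / (2 * Q) := by
          have := min_le_right δ₁ (1 / (2 * Q)); linarith
        have h2 : Q * (t - c) ≤ Q * (1 / (2 * Q)) := mul_le_mul_of_nonneg_left h1.le hQ.le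
        have h3 : Q * (1 / (2 * Q)) = 1 / 2 := by field_simp
        linarith
      have hmzero : m = 0 := by
        have h1 := hgrow x hxK.1 hxK.2.1 hxK.2.2
        have h2 := hineq x hxK.1
        have h3 : Q * m * (x - c) ≤ Q * m * (t - c) := by
          apply mul_le_mul_of_nonneg_left _ hQm
          linarith [hxK.2.2]
        have h4 : Q * m * (t - c) ≤ m / 2 := by nlinarith
        have h5 : m ≤ m / 2 := by
          calc m = u x := rfl
            _ ≤ W x - W a := h2
            _ = W x - W c := by rw [hWca]
            _ ≤ Q * m * (x - c) := h1
            _ ≤ m / 2 := le_trans h3 h4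
        linarith
      have htB : t ∈ B := by
        refine ⟨htS, fun s hsS hst => ?_⟩
        rcases le_or_gt s c with h | h
        · exact hcB.2 s hsS h
        · have := hgrow s hsS (le_of_lt h) hst
          rw [hmzero] at this
          have : W s - W c ≤ 0 := by nlinarith
          linarith [hWca.le, hWca.ge]
      have : t ≤ c := le_csSup hBbdd htB
      linarith
    · -- right scattered
      have hWσ := deriv_sigma_eq hcS hder
      have hσB : tsSigma S c ∈ B := by
        refine ⟨hσS, fun s hsS hsσ => ?_⟩
        rcases le_or_gt s c with h | h
        · exact hcB.2 s hsS h
        · have h2 : tsSigma S c ≤ s := sigma_le hsS h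
          have h3 : s = tsSigma S c := le_antisymm hsσ h2
          rw [h3, hWσ, hWca]; linarith
      have : tsSigma S c ≤ c := le_csSup hBbdd hσB
      linarith
  intro s hs
  exact (key s hs (hcbeq ▸ hSub s hs)).1
end

section
/- Preservation of uniform rd-equicontinuity under composition: let f : [a,b]_T × B̄(u₀,β) → E be such that the family {f(·,x)}_{x ∈ B̄(u₀,β)} is uniformly rd-equicontinuous on [a,b]_T and the family {f(t,·)}_{t ∈ [a,b]_T} is uniformly equicontinuous on B̄(u₀,β). Then for every uniformly equicontinuous family X of continuous functions u : [a,b]_T → B̄(u₀,β), the family {f(·,u(·)) : u ∈ X} is uniformly rd-equicontinuous on [a,b]_T; in particular f(·,u(·)) is rd-continuous for each such u. -/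
open Set Filter

/-- Uniform rd-equicontinuity of a family `X` of functions on the time scale
interval `S` (with endpoints `a`, `b`): the finite-cover ε-δ condition of
rd-continuity holds with the same partition and radii for all members of `X`. -/
def UnifRdEquicontOn {E : Type*} [NormedAddCommGroup E]
    (S : Set ℝ) (a b : ℝ) (X : Set (ℝ → E)) : Prop :=
  ∀ ε > (0:ℝ), ∃ n : ℕ, ∃ τ : Fin (n+1) → ℝ, ∃ δ : Fin (n+1) → ℝ,
    (∀ i, τ i ∈ S) ∧ StrictMono τ ∧ τ 0 = a ∧ τ (Fin.last n) = b ∧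
    (∀ i, 0 < δ i) ∧ (S ⊆ ⋃ i, Set.Ioo (τ i - δ i) (τ i + δ i)) ∧
    ∀ u ∈ X, ∀ j : Fin (n+1),
      ∀ s ∈ S ∩ Set.Ioo (τ j - δ j) (τ j + δ j),
      ∀ t ∈ S ∩ Set.Ioo (τ j - δ j) (τ j + δ j),
        (tsSigma S (τ j) = τ j ∨ (s < τ j ∧ t < τ j) ∨ (τ j ≤ s ∧ τ j ≤ t)) →
        ‖u s - u t‖ < ε

/-- preservation of uniform rd-equicontinuity under composition
`u ↦ f(·, u(·))` for a uniformly equicontinuous family `X` of continuous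
functions with values in `B̄(u₀,β)`. -/
theorem unifRdEquicont_comp
    {E : Type*} [NormedAddCommGroup E] [NormedSpace ℝ E] [CompleteSpace E]
    (T : Set ℝ) (hT : T.Nonempty) (hTc : IsClosed T) (a b : ℝ)
    (ha : a ∈ T) (hb : b ∈ T) (hab : a ≤ b)
    (u₀ : E) (β : ℝ) (hβ : 0 < β) (f : ℝ → E → E)
    (hf1 : UnifRdEquicontOn (T ∩ Set.Icc a b) a b
      ((fun x : E => fun t : ℝ => f t x) '' Metric.closedBall u₀ β))
    (hf2 : ∀ ε > (0:ℝ), ∃ δ > (0:ℝ), ∀ t ∈ T ∩ Set.Icc a b,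
      ∀ x ∈ Metric.closedBall u₀ β, ∀ y ∈ Metric.closedBall u₀ β,
        ‖x - y‖ < δ → ‖f t x - f t y‖ < ε)
    (X : Set (ℝ → E))
    (hmaps : ∀ u ∈ X, ∀ t ∈ T ∩ Set.Icc a b, u t ∈ Metric.closedBall u₀ β)
    (hcont : ∀ u ∈ X, ContinuousOn u (T ∩ Set.Icc a b))
    (hXequi : ∀ ε > (0:ℝ), ∃ δ > (0:ℝ), ∀ u ∈ X,
      ∀ s ∈ T ∩ Set.Icc a b, ∀ t ∈ T ∩ Set.Icc a b,
        |s - t| < δ → ‖u s - u t‖ < ε) :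
    UnifRdEquicontOn (T ∩ Set.Icc a b) a b
      ((fun u : ℝ → E => fun t : ℝ => f t (u t)) '' X) ∧
    ∀ u ∈ X, RdContinuousOn (T ∩ Set.Icc a b) (fun t => f t (u t)) := by
  classical
  set S := T ∩ Set.Icc a b with hSdef
  have haS : a ∈ S := ⟨ha, le_refl a, hab⟩
  have hbS : b ∈ S := ⟨hb, hab, le_refl b⟩
  have key : UnifRdEquicontOn S a b
      ((fun u : ℝ → E => fun t : ℝ => f t (u t)) '' X) := by
    intro ε hε
    obtain ⟨δ₂, hδ₂, H2⟩ := hf2 (ε/2) (by positivity)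
    obtain ⟨δX, hδX, HX⟩ := hXequi δ₂ hδ₂
    obtain ⟨n, τ, δ, hτS, hτmono, hτ0, hτlast, hδpos, hcov, hosc⟩ :=
      hf1 (ε/2) (by positivity)
    have hcov' : ∀ c : ℝ, ∃ j : Fin (n+1),
        c ∈ S → c ∈ Set.Ioo (τ j - δ j) (τ j + δ j) := by
      intro c
      by_cases hc : c ∈ S
      · obtain ⟨j, hj⟩ := Set.mem_iUnion.1 (hcov hc)
        exact ⟨j, fun _ => hj⟩
      · exact ⟨0, fun h => absurd h hc⟩
    choose J hJ using hcov'
    set r : ℝ → ℝ := fun c =>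
      min (δX/2) (min (min (c - (τ (J c) - δ (J c))) ((τ (J c) + δ (J c)) - c))
        (if c = τ (J c) then δX/2 else |c - τ (J c)|)) with hrdef
    have hrpos : ∀ c ∈ S, 0 < r c := by
      intro c hc
      have h1 := hJ c hc
      refine lt_min (by positivity) (lt_min (lt_min ?_ ?_) ?_)
      · linarith [h1.1]
      · linarith [h1.2]
      · split
        · positivity
        · rename_i h; exact abs_pos.2 (sub_ne_zero.2 h)
    have hrX : ∀ c, r c ≤ δX / 2 := fun c => min_le_left _ _
    have hr1 : ∀ c, r c ≤ c - (τ (J c) - δ (J c)) :=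
      fun c => le_trans (min_le_right _ _) (le_trans (min_le_left _ _) (min_le_left _ _))
    have hr2 : ∀ c, r c ≤ (τ (J c) + δ (J c)) - c :=
      fun c => le_trans (min_le_right _ _) (le_trans (min_le_left _ _) (min_le_right _ _))
    have hr3 : ∀ c, c ≠ τ (J c) → r c ≤ |c - τ (J c)| := by
      intro c hc
      have h : r c ≤ (if c = τ (J c) then δX / 2 else |c - τ (J c)|) :=
        le_trans (min_le_right (δX / 2) _) (min_le_right _ _)
      rwa [if_neg hc] at h
    have hScomp : IsCompact S := IsCompact.inter_left isCompact_Icc hTc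
    have hsub : S ⊆ ⋃ c ∈ S, Set.Ioo (c - r c) (c + r c) := by
      intro x hx
      exact Set.mem_biUnion hx ⟨by linarith [hrpos x hx], by linarith [hrpos x hx]⟩
    obtain ⟨B, hBS, hBfin, hBcov⟩ :=
      hScomp.elim_finite_subcover_image (fun c _ => isOpen_Ioo) hsub
    set F : Finset ℝ := insert a (insert b hBfin.toFinset) with hFdef
    have hFS : ∀ x ∈ F, x ∈ S := by
      intro x hx
      rcases Finset.mem_insert.1 hx with h | h
      · exact h ▸ haS
      rcases Finset.mem_insert.1 h with h | h
      · exact h ▸ hbS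
      · exact hBS (hBfin.mem_toFinset.1 h)
    have haF : a ∈ F := Finset.mem_insert_self _ _
    have hbF : b ∈ F := Finset.mem_insert.2 (Or.inr (Finset.mem_insert_self _ _))
    have hFne : F.Nonempty := ⟨a, haF⟩
    have hcard : F.card = (F.card - 1) + 1 :=
      (Nat.succ_pred_eq_of_pos (Finset.card_pos.2 hFne)).symm
    refine ⟨F.card - 1, fun i => (F.orderIsoOfFin hcard i : ℝ),
      fun i => r ((F.orderIsoOfFin hcard i : ℝ)), ?_, ?_, ?_, ?_, ?_, ?_, ?_⟩
    · intro i; exact hFS _ (F.orderIsoOfFin hcard i).2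
    · intro i j hij
      exact Subtype.coe_lt_coe.2 ((F.orderIsoOfFin hcard).strictMono hij)
    · -- τ' 0 = a
      have h1 : a ≤ (F.orderIsoOfFin hcard 0 : ℝ) :=
        (hFS _ (F.orderIsoOfFin hcard 0).2).2.1
      have h2 : ((F.orderIsoOfFin hcard ((F.orderIsoOfFin hcard).symm ⟨a, haF⟩)) : ℝ) = a := by
        simp
      have h3 : (F.orderIsoOfFin hcard 0 : ℝ) ≤
          ((F.orderIsoOfFin hcard ((F.orderIsoOfFin hcard).symm ⟨a, haF⟩)) : ℝ) :=
        Subtype.coe_le_coe.2 ((F.orderIsoOfFin hcard).monotone (Fin.zero_le _))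
      linarith [h2 ▸ h3]
    · -- τ' last = b
      have h1 : (F.orderIsoOfFin hcard (Fin.last _) : ℝ) ≤ b :=
        (hFS _ (F.orderIsoOfFin hcard (Fin.last _)).2).2.2
      have h2 : ((F.orderIsoOfFin hcard ((F.orderIsoOfFin hcard).symm ⟨b, hbF⟩)) : ℝ) = b := by
        simp
      have h3 : ((F.orderIsoOfFin hcard ((F.orderIsoOfFin hcard).symm ⟨b, hbF⟩)) : ℝ) ≤
          (F.orderIsoOfFin hcard (Fin.last _) : ℝ) :=
        Subtype.coe_le_coe.2 ((F.orderIsoOfFin hcard).monotone (Fin.le_last _))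
      linarith [h2 ▸ h3]
    · intro i; exact hrpos _ (hFS _ (F.orderIsoOfFin hcard i).2)
    · -- covering
      intro x hx
      have := hBcov hx
      obtain ⟨c, hcB, hcx⟩ := Set.mem_iUnion₂.1 this
      have hcF : c ∈ F :=
        Finset.mem_insert.2 (Or.inr (Finset.mem_insert.2 (Or.inr (hBfin.mem_toFinset.2 hcB))))
      refine Set.mem_iUnion.2 ⟨(F.orderIsoOfFin hcard).symm ⟨c, hcF⟩, ?_⟩
      simpa using hcx
    · -- main oscillation estimate
      rintro v ⟨u, hu, rfl⟩ j s hs t ht hside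
      set c : ℝ := (F.orderIsoOfFin hcard j : ℝ) with hcdef
      have hcS : c ∈ S := hFS _ (F.orderIsoOfFin hcard j).2
      have hjc := hJ c hcS
      have hsIoo : s ∈ Set.Ioo (τ (J c) - δ (J c)) (τ (J c) + δ (J c)) := by
        constructor
        · have := hs.2.1; have := hr1 c; linarith
        · have := hs.2.2; have := hr2 c; linarith
      have htIoo : t ∈ Set.Ioo (τ (J c) - δ (J c)) (τ (J c) + δ (J c)) := by
        constructor
        · have := ht.2.1; have := hr1 c; linarith
        · have := ht.2.2; have := hr2 c; linarith
      have hsideo : tsSigma S (τ (J c)) = τ (J c) ∨ (s < τ (J c) ∧ t < τ (J c)) ∨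
          (τ (J c) ≤ s ∧ τ (J c) ≤ t) := by
        by_cases hcase : c = τ (J c)
        · rw [← hcase]; exact hside
        · have hle := hr3 c hcase
          rcases lt_or_gt_of_ne hcase with hlt | hgt
          · have habs : |c - τ (J c)| = τ (J c) - c := by
              rw [abs_of_nonpos (by linarith)]; ring
            rw [habs] at hle
            refine Or.inr (Or.inl ⟨?_, ?_⟩)
            · have := hs.2.2; linarith
            · have := ht.2.2; linarith
          · have habs : |c - τ (J c)| = c - τ (J c) := abs_of_nonneg (by linarith)
            rw [habs] at hle
            refine Or.inr (Or.inr ⟨?_, ?_⟩)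
            · have := hs.2.1; linarith
            · have := ht.2.1; linarith
      have husball : u s ∈ Metric.closedBall u₀ β := hmaps u hu s hs.1
      have hutball : u t ∈ Metric.closedBall u₀ β := hmaps u hu t ht.1
      have h1 : ‖f s (u s) - f t (u s)‖ < ε / 2 := by
        have := hosc (fun t' => f t' (u s)) ⟨u s, husball, rfl⟩ (J c)
          s ⟨hs.1, hsIoo⟩ t ⟨ht.1, htIoo⟩ hsideo
        simpa using this
      have hst : |s - t| < δX := by
        have h2 := hrX c
        have hs1 := hs.2.1; have hs2 := hs.2.2
        have ht1 := ht.2.1; have ht2 := ht.2.2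
        rw [abs_lt]; constructor <;> linarith
      have h2 : ‖f t (u s) - f t (u t)‖ < ε / 2 := by
        have huu : ‖u s - u t‖ < δ₂ := HX u hu s hs.1 t ht.1 hst
        exact H2 t ht.1 (u s) husball (u t) hutball huu
      calc ‖f s (u s) - f t (u t)‖
          ≤ ‖f s (u s) - f t (u s)‖ + ‖f t (u s) - f t (u t)‖ := norm_sub_le_norm_sub_add_norm_sub _ _ _
        _ < ε / 2 + ε / 2 := add_lt_add h1 h2
        _ = ε := by ring
  refine ⟨key, ?_⟩
  intro u hu
  have hgmem : (fun t => f t (u t)) ∈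
      ((fun u : ℝ → E => fun t : ℝ => f t (u t)) '' X) := ⟨u, hu, rfl⟩
  constructor
  · -- continuity at right-dense points
    intro t ht hσ
    rw [Metric.continuousWithinAt_iff]
    intro ε hε
    obtain ⟨n, τ, δ, hτS, hτmono, hτ0, hτlast, hδpos, hcov, hosc⟩ := key ε hε
    obtain ⟨j, hj⟩ := Set.mem_iUnion.1 (hcov ht)
    rcases lt_trichotomy t (τ j) with hlt | heq | hgt
    · refine ⟨min (τ j - t) (t - (τ j - δ j)), lt_min (by linarith) (by linarith [hj.1]), ?_⟩
      intro y hy hdy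
      rw [Real.dist_eq, abs_lt] at hdy
      have hy1 : y < τ j := by
        have := hdy.2; have := min_le_left (τ j - t) (t - (τ j - δ j)); linarith
      have hy2 : τ j - δ j < y := by
        have := hdy.1; have := min_le_right (τ j - t) (t - (τ j - δ j)); linarith
      rw [dist_eq_norm]
      exact hosc _ hgmem j y ⟨hy, hy2, by linarith [hδpos j]⟩ t ⟨ht, hj⟩
        (Or.inr (Or.inl ⟨hy1, hlt⟩))
    · refine ⟨δ j, hδpos j, ?_⟩
      intro y hy hdy
      rw [Real.dist_eq, abs_lt] at hdy
      rw [dist_eq_norm]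
      refine hosc _ hgmem j y ⟨hy, ?_, ?_⟩ t ⟨ht, hj⟩ (Or.inl (heq ▸ hσ))
      · linarith [hdy.1]
      · linarith [hdy.2]
    · refine ⟨min (t - τ j) ((τ j + δ j) - t), lt_min (by linarith) (by linarith [hj.2]), ?_⟩
      intro y hy hdy
      rw [Real.dist_eq, abs_lt] at hdy
      have hy1 : τ j < y := by
        have := hdy.1; have := min_le_left (t - τ j) ((τ j + δ j) - t); linarith
      have hy2 : y < τ j + δ j := by
        have := hdy.2; have := min_le_right (t - τ j) ((τ j + δ j) - t); linarith
      rw [dist_eq_norm]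
      exact hosc _ hgmem j y ⟨hy, by linarith [hδpos j], hy2⟩ t ⟨ht, hj⟩
        (Or.inr (Or.inr ⟨le_of_lt hy1, le_of_lt hgt⟩))
  · -- existence of left limits
    intro t ht _
    by_cases hbot : nhdsWithin t (S ∩ Set.Iio t) = ⊥
    · exact ⟨f t (u t), hbot ▸ tendsto_bot⟩
    · haveI : (nhdsWithin t (S ∩ Set.Iio t)).NeBot := ⟨hbot⟩
      have hC : Cauchy (Filter.map (fun s => f s (u s)) (nhdsWithin t (S ∩ Set.Iio t))) := by
        refine Metric.cauchy_iff.2 ⟨Filter.map_neBot, ?_⟩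
        intro ε hε
        obtain ⟨n, τ, δ, hτS, hτmono, hτ0, hτlast, hδpos, hcov, hosc⟩ := key ε hε
        obtain ⟨j, hj⟩ := Set.mem_iUnion.1 (hcov ht)
        set mm : ℝ := if τ j < t then τ j else τ j - δ j with hmmdef
        have hmt : mm < t := by
          rw [hmmdef]; split
          · assumption
          · linarith [hj.1]
        have hsubIoo : ∀ z ∈ S ∩ Set.Ioo mm t,
            z ∈ S ∩ Set.Ioo (τ j - δ j) (τ j + δ j) := by
          rintro z ⟨hzS, hz1, hz2⟩
          refine ⟨hzS, ?_, by linarith [hj.2]⟩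
          rw [hmmdef] at hz1
          split at hz1
          · linarith [hδpos j]
          · linarith
        have hsides : ∀ z ∈ S ∩ Set.Ioo mm t, ∀ w ∈ S ∩ Set.Ioo mm t,
            tsSigma S (τ j) = τ j ∨ (z < τ j ∧ w < τ j) ∨ (τ j ≤ z ∧ τ j ≤ w) := by
          rintro z ⟨_, hz1, hz2⟩ w ⟨_, hw1, hw2⟩
          rw [hmmdef] at hz1 hw1
          by_cases hcase : τ j < t
          · rw [if_pos hcase] at hz1 hw1
            exact Or.inr (Or.inr ⟨le_of_lt hz1, le_of_lt hw1⟩)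
          · push_neg at hcase
            exact Or.inr (Or.inl ⟨lt_of_lt_of_le hz2 hcase, lt_of_lt_of_le hw2 hcase⟩)
        refine ⟨(fun s => f s (u s)) '' (S ∩ Set.Ioo mm t), ?_, ?_⟩
        · apply Filter.image_mem_map
          have h1 : Set.Ioi mm ∈ nhds t := Ioi_mem_nhds hmt
          have h2 : (S ∩ Set.Iio t) ∩ Set.Ioi mm ∈ nhdsWithin t (S ∩ Set.Iio t) :=
            Filter.inter_mem self_mem_nhdsWithin (mem_nhdsWithin_of_mem_nhds h1)
          refine Filter.mem_of_superset h2 ?_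
          rintro x ⟨⟨hxS, hxlt⟩, hxm⟩
          exact ⟨hxS, hxm, hxlt⟩
        · rintro x ⟨z, hz, rfl⟩ y ⟨w, hw, rfl⟩
          rw [dist_eq_norm]
          exact hosc _ hgmem j z (hsubIoo z hz) w (hsubIoo w hw) (hsides z hz w hw)
      obtain ⟨L, hL⟩ := CompleteSpace.complete hC
      exact ⟨L, hL⟩
end
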